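/- arXiv:0901.3774 — 2 statements merged into one kernel-verified Lean document; each statement's English description precedes it below -/
import Mathlib

section
/- Let Δ be a connected graph and C a collection of at least two connected subgraphs covering every edge of Δ at least twice. If all triple intersections of members of C are empty, then C has at most two elements. -/
/-!
Label each vertex `v` by the set of members of the collection containing it. Both endpoints of
an edge lie in two distinct members `i ≠ j`, and since no vertex lies in three members, both
endpoints have label set exactly `{i, j}`. So labels are constant along edges, hence constant
on the connected graph. As every member is nonempty, every member contains one fixed vertex,
which is impossible for three distinct members.
-/

namespace SimpleGraph

variable {V : Type*} {G : SimpleGraph V}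

theorem Preconnected.apply_eq_of_forall_adj {α : Type*} {f : V → α} (hG : G.Preconnected)
    (hf : ∀ u v, G.Adj u v → f u = f v) (u v : V) : f u = f v := by
  obtain ⟨p⟩ := hG u v
  induction p with
  | nil => rfl
  | cons h _ ih => exact (hf _ _ h).trans ih

namespace Subgraph

variable {ι : Type*} {Δ : ι → G.Subgraph}
  (htriple : ∀ i j k, i ≠ j → j ≠ k → i ≠ k → (Δ i).verts ∩ (Δ j).verts ∩ (Δ k).verts = ∅)
include htriple

theorem setOf_mem_verts_eq_pair {i j : ι} (hij : i ≠ j) {w : V} (hi : w ∈ (Δ i).verts)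
    (hj : w ∈ (Δ j).verts) : {k | w ∈ (Δ k).verts} = {i, j} := by
  ext k
  refine ⟨fun hk => ?_, by rintro (rfl | rfl) <;> assumption⟩
  by_contra hkij
  simp only [Set.mem_insert_iff, Set.mem_singleton_iff, not_or] at hkij
  exact Set.not_nonempty_iff_eq_empty.mpr (htriple i j k hij (Ne.symm hkij.2) (Ne.symm hkij.1))
    ⟨w, ⟨hi, hj⟩, hk⟩

theorem setOf_mem_verts_eq_of_adj
    (hcover : ∀ e ∈ G.edgeSet, ∃ i j, i ≠ j ∧ e ∈ (Δ i).edgeSet ∧ e ∈ (Δ j).edgeSet)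
    {u v : V} (huv : G.Adj u v) : {k | u ∈ (Δ k).verts} = {k | v ∈ (Δ k).verts} := by
  obtain ⟨i, j, hij, hi, hj⟩ := hcover s(u, v) huv
  rw [Subgraph.mem_edgeSet] at hi hj
  rw [setOf_mem_verts_eq_pair htriple hij hi.fst_mem hj.fst_mem,
    setOf_mem_verts_eq_pair htriple hij hi.snd_mem hj.snd_mem]

theorem eq_or_eq_or_eq_of_cover_of_triple_inter_eq_empty (hG : G.Preconnected)
    (hne : ∀ i, (Δ i).verts.Nonempty)
    (hcover : ∀ e ∈ G.edgeSet, ∃ i j, i ≠ j ∧ e ∈ (Δ i).edgeSet ∧ e ∈ (Δ j).edgeSet)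
    (i j k : ι) : i = j ∨ j = k ∨ i = k := by
  by_contra! hijk
  have hlabel := hG.apply_eq_of_forall_adj
    (fun _ _ => setOf_mem_verts_eq_of_adj htriple hcover)
  obtain ⟨u, hu⟩ := hne i
  obtain ⟨v, hv⟩ := hne j
  obtain ⟨w, hw⟩ := hne k
  have hvu : u ∈ (Δ j).verts := (Set.ext_iff.mp (hlabel u v) j).mpr hv
  have hwu : u ∈ (Δ k).verts := (Set.ext_iff.mp (hlabel u w) k).mpr hw
  exact Set.not_nonempty_iff_eq_empty.mpr (htriple i j k hijk.1 hijk.2.1 hijk.2.2)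
    ⟨u, ⟨hu, hvu⟩, hwu⟩

end Subgraph

end SimpleGraph

theorem stmt1_general {V : Type*} (G : SimpleGraph V) (hG : G.Connected)
    (m : ℕ) (Δ : Fin m → G.Subgraph)
    (hconn : ∀ i, (Δ i).Connected)
    (hcover : ∀ e ∈ G.edgeSet, ∃ i j : Fin m, i ≠ j ∧ e ∈ (Δ i).edgeSet ∧ e ∈ (Δ j).edgeSet)
    (htriple : ∀ i j k : Fin m, i ≠ j → j ≠ k → i ≠ k →
      (Δ i).verts ∩ (Δ j).verts ∩ (Δ k).verts = ∅) :
    m ≤ 2 := by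
  by_contra! hm
  obtain ⟨i, j, k, hij, hik, hjk⟩ := Fintype.two_lt_card_iff.mp ((Fintype.card_fin m).symm ▸ hm)
  rcases SimpleGraph.Subgraph.eq_or_eq_or_eq_of_cover_of_triple_inter_eq_empty htriple
    hG.preconnected (fun i => (hconn i).nonempty) hcover i j k with h | h | h
  exacts [hij h, hjk h, hik h]

/-- Let Δ be a connected graph and `C` a collection of at least two connected subgraphs
covering every edge of Δ at least twice.  If all triple intersections of members of `C`
are empty, then `C` has at most two elements. -/
theorem stmt1 {V : Type*} (G : SimpleGraph V) (hG : G.Connected)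
    (m : ℕ) (hm : 2 ≤ m) (Δ : Fin m → G.Subgraph)
    (hconn : ∀ i, (Δ i).Connected)
    (hcover : ∀ e ∈ G.edgeSet, ∃ i j : Fin m, i ≠ j ∧ e ∈ (Δ i).edgeSet ∧ e ∈ (Δ j).edgeSet)
    (htriple : ∀ i j k : Fin m, i ≠ j → j ≠ k → i ≠ k →
      (Δ i).verts ∩ (Δ j).verts ∩ (Δ k).verts = ∅) :
    m ≤ 2 :=
  stmt1_general G hG m Δ hconn hcover htriple
end

section
/- If G₁ and G₂ are groups with coranks CR(G₁) and CR(G₂), then the corank of the free product G₁ * G₂ equals CR(G₁) + CR(G₂) when both coranks are finite. In particular, the corank of a free group of rank n is n. -/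
/-!
A surjection `G₁ ∗ G₂ ↠ F_n` sends `G₁` and `G₂` onto subgroups `H₁`, `H₂` generating `F_n`.
By Nielsen–Schreier these are free, and as quotients of `Gᵢ` their ranks are at most `CR(Gᵢ)`
(an infinite rank would make the corank unbounded). A free basis of `H₁` together with one of
`H₂` generates `F_n`, so `n ≤ CR(G₁) + CR(G₂)`; ranks of finitely generated free groups are
compared by counting homomorphisms to `ℤ/2`. Conversely, surjections `Gᵢ ↠ F_{CR(Gᵢ)}` combine
into `G₁ ∗ G₂ ↠ F_{CR(G₁)} ∗ F_{CR(G₂)} ≅ F_{CR(G₁) + CR(G₂)}`.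
-/

open Function Monoid.Coprod

/-- The set of ranks of free groups onto which `G` surjects; its supremum is the corank
`CR(G)`. -/
def corankSet (G : Type*) [Group G] : Set ℕ :=
  {n | ∃ f : G →* FreeGroup (Fin n), Function.Surjective f}

namespace FreeGroup

theorem card_le_card_of_surjective {α β : Type*} [Finite α] (f : FreeGroup α →* FreeGroup β)
    (hf : Surjective f) : Nat.card β ≤ Nat.card α := by
  cases finite_or_infinite β with
  | inr => simp [Nat.card_eq_zero_of_infinite]
  | inl =>
    have hinj : Injective fun g : β → Multiplicative (ZMod 2) => lift.symm ((lift g).comp f) :=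
      fun _ _ h => lift.injective ((MonoidHom.cancel_right hf).1 (lift.symm.injective h))
    have := Nat.card_le_card_of_injective _ hinj
    rw [Nat.card_fun, Nat.card_fun, Nat.card_congr Multiplicative.toAdd, Nat.card_zmod] at this
    exact (Nat.pow_le_pow_iff_right (by norm_num)).1 this

theorem card_le_card_of_closure_range_eq_top {α β : Type*} [Finite α] (g : α → FreeGroup β)
    (hg : Subgroup.closure (Set.range g) = ⊤) : Nat.card β ≤ Nat.card α :=
  card_le_card_of_surjective (lift g) <| by
    rwa [← MonoidHom.range_eq_top, range_lift_eq_closure]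

theorem lift_extend_surjective {α β : Type*} (e : β ↪ α) :
    Surjective (lift (extend e of 1)) := by
  rw [← MonoidHom.range_eq_top, eq_top_iff, ← closure_range_of, Subgroup.closure_le]
  rintro _ ⟨b, rfl⟩
  exact ⟨of (e b), by simp [e.injective.extend_apply]⟩

theorem range_map_inl_sup_range_map_inr (α β : Type*) :
    (map (Sum.inl : α → α ⊕ β)).range ⊔ (map Sum.inr).range = ⊤ := by
  rw [range_map, range_map, ← Subgroup.closure_union, ← Set.image_union,
    Set.range_inl_union_range_inr, Set.image_univ, closure_range_of]

end FreeGroup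

theorem IsFreeGroup.closure_range_of {H : Type*} [Group H] [IsFreeGroup H] :
    Subgroup.closure (Set.range (of : Generators H → H)) = ⊤ := by
  rw [of, Set.range_comp]
  change Subgroup.closure ((mulEquiv H : FreeGroup (Generators H) →* H) '' _) = ⊤
  rw [← MonoidHom.map_closure, FreeGroup.closure_range_of,
    Subgroup.map_top_of_surjective _ (mulEquiv H).surjective]

open IsFreeGroup in
theorem Subgroup.closure_range_coe_of {F : Type*} [Group F] (K : Subgroup F) [IsFreeGroup K] :
    Subgroup.closure (Set.range fun x : Generators K => ((of x : K) : F)) = K := by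
  rw [show (fun x : Generators K => ((of x : K) : F)) = K.subtype ∘ of from rfl, Set.range_comp,
    ← MonoidHom.map_closure, closure_range_of, ← MonoidHom.range_eq_map, K.range_subtype]

section Corank

variable {G H : Type*} [Group G] [Group H]

theorem zero_mem_corankSet : 0 ∈ corankSet G :=
  ⟨1, fun _ => ⟨1, Subsingleton.elim _ _⟩⟩

theorem corankSet_subset_of_surjective {φ : G →* H} (hφ : Surjective φ) :
    corankSet H ⊆ corankSet G := by
  rintro n ⟨f, hf⟩
  exact ⟨f.comp φ, hf.comp hφ⟩

theorem sSup_corankSet_freeGroup (n : ℕ) : sSup (corankSet (FreeGroup (Fin n))) = n := by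
  refine IsGreatest.csSup_eq ⟨⟨MonoidHom.id _, surjective_id⟩, ?_⟩
  rintro m ⟨f, hf⟩
  simpa using FreeGroup.card_le_card_of_surjective f hf

namespace IsFreeGroup

variable [IsFreeGroup H]

theorem mem_corankSet_of_embedding {n : ℕ} (e : Fin n ↪ Generators H) : n ∈ corankSet H :=
  ⟨(FreeGroup.lift (extend e FreeGroup.of 1)).comp (toFreeGroup H).toMonoidHom,
    (FreeGroup.lift_extend_surjective e).comp (toFreeGroup H).surjective⟩

theorem finite_generators_of_bddAbove (h : BddAbove (corankSet H)) : Finite (Generators H) := by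
  by_contra hinf
  rw [not_finite_iff_infinite] at hinf
  obtain ⟨c, hc⟩ := h
  have := hc (mem_corankSet_of_embedding (Fin.valEmbedding.trans (Infinite.natEmbedding _)) :
    c + 1 ∈ corankSet H)
  omega

theorem finite_generators_and_card_le_sSup_corankSet (h : BddAbove (corankSet G)) {φ : G →* H}
    (hφ : Surjective φ) :
    Finite (Generators H) ∧ Nat.card (Generators H) ≤ sSup (corankSet G) := by
  have hsub := corankSet_subset_of_surjective hφ
  have := finite_generators_of_bddAbove (h.mono hsub)
  exact ⟨this, le_csSup h <| hsub <|
    mem_corankSet_of_embedding (Finite.equivFin _).symm.toEmbedding⟩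

end IsFreeGroup

variable {G₁ G₂ : Type*} [Group G₁] [Group G₂]

theorem sSup_add_sSup_mem_upperBounds_corankSet_coprod (h₁ : BddAbove (corankSet G₁))
    (h₂ : BddAbove (corankSet G₂)) :
    sSup (corankSet G₁) + sSup (corankSet G₂) ∈ upperBounds (corankSet (G₁ ∗ G₂)) := by
  rintro n ⟨φ, hφ⟩
  obtain ⟨_, hr₁⟩ := IsFreeGroup.finite_generators_and_card_le_sSup_corankSet h₁
    (φ.comp (inl : G₁ →* G₁ ∗ G₂)).rangeRestrict_surjective
  obtain ⟨_, hr₂⟩ := IsFreeGroup.finite_generators_and_card_le_sSup_corankSet h₂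
    (φ.comp (inr : G₂ →* G₁ ∗ G₂)).rangeRestrict_surjective
  have hgen : Subgroup.closure (Set.range (Sum.elim
      (fun x => (IsFreeGroup.of x : (φ.comp inl).range).1)
      (fun x => (IsFreeGroup.of x : (φ.comp inr).range).1))) = ⊤ := by
    rw [Set.Sum.elim_range, Subgroup.closure_union, Subgroup.closure_range_coe_of,
      Subgroup.closure_range_coe_of, ← range_eq, MonoidHom.range_eq_top.2 hφ]
  have := FreeGroup.card_le_card_of_closure_range_eq_top _ hgen
  rw [Nat.card_sum, Nat.card_fin] at this
  omega

theorem add_mem_corankSet_coprod {a b : ℕ} (ha : a ∈ corankSet G₁) (hb : b ∈ corankSet G₂) :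
    a + b ∈ corankSet (G₁ ∗ G₂) := by
  obtain ⟨f₁, hf₁⟩ := ha
  obtain ⟨f₂, hf₂⟩ := hb
  let e := FreeGroup.freeGroupCongr (finSumFinEquiv (m := a) (n := b))
  refine ⟨e.toMonoidHom.comp (lift ((FreeGroup.map Sum.inl).comp f₁)
    ((FreeGroup.map Sum.inr).comp f₂)), e.surjective.comp ?_⟩
  rw [← MonoidHom.range_eq_top, range_lift, MonoidHom.range_comp, MonoidHom.range_comp,
    MonoidHom.range_eq_top.2 hf₁, MonoidHom.range_eq_top.2 hf₂, ← MonoidHom.range_eq_map,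
    ← MonoidHom.range_eq_map, FreeGroup.range_map_inl_sup_range_map_inr]

end Corank

/-- If `G₁` and `G₂` have finite coranks, then the corank of the free product `G₁ * G₂`
equals `CR(G₁) + CR(G₂)`.  In particular the corank of a free group of rank `n` is `n`. -/
theorem stmt14 (G₁ G₂ : Type*) [Group G₁] [Group G₂]
    (h₁ : BddAbove (corankSet G₁)) (h₂ : BddAbove (corankSet G₂)) :
    sSup (corankSet (Monoid.Coprod G₁ G₂)) = sSup (corankSet G₁) + sSup (corankSet G₂) ∧
    ∀ n : ℕ, sSup (corankSet (FreeGroup (Fin n))) = n := by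
  refine ⟨IsGreatest.csSup_eq ⟨?_, sSup_add_sSup_mem_upperBounds_corankSet_coprod h₁ h₂⟩,
    sSup_corankSet_freeGroup⟩
  exact add_mem_corankSet_coprod (Nat.sSup_mem ⟨0, zero_mem_corankSet⟩ h₁)
    (Nat.sSup_mem ⟨0, zero_mem_corankSet⟩ h₂)
end
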